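/- Every separable QCCE is reachable by no-regret play (Theorem 3.1(b)): Fix a k-player quantum game with utility tensors R_i. Let ρ* be a separable quantum coarse correlated equilibrium, i.e. ρ* = Σ_{j=1}^m λ_j · (⊗_i ρ_{ij}) is a finite convex combination of product profiles and Tr(R_i·(ρ_i' ⊗ Tr_i ρ*)) ≤ Tr(R_i·ρ*) for every player i and every density matrix ρ_i' on ℂ^{n_i}. Then there exist sequences of density matrices (ρ_i^t)_{t∈ℕ} for each player i such that, writing ρ^t = ⊗_i ρ_i^t and ρ̄(T) = (1/T)·Σ_{t=1}^T ρ^t: (1) ρ̄(T) converges to ρ* as T → ∞, and (2) for every player i, limsup_{T→∞} sup over density matrices ρ_i' of (1/T)·Σ_{t=1}^T [Tr(R_i·(ρ_i' ⊗ (⊗_{j≠i} ρ_j^t))) − Tr(R_i·ρ^t)] ≤ 0, i.e. the sequence of play is no-external-regret for every player. -/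

import Mathlib

open Matrix Filter
open scoped ComplexOrder Topology

/-- A density matrix: positive semidefinite with trace 1. -/
def IsDensity {d : Type*} [Fintype d] (ρ : Matrix d d ℂ) : Prop :=
  ρ.PosSemidef ∧ ρ.trace = 1

/-- The product profile `⊗ᵢ ρᵢ`. -/
noncomputable def prodProfile {k : ℕ} {n : Fin k → ℕ}
    (ρ : ∀ i, Matrix (Fin (n i)) (Fin (n i)) ℂ) :
    Matrix (∀ j, Fin (n j)) (∀ j, Fin (n j)) ℂ :=
  fun s s' => ∏ j, ρ j (s j) (s' j)

/-- The joint matrix `ρᵢ' ⊗ Trᵢ M`: player `i`'s register carries `ρᵢ'` and the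
remaining registers carry the marginal `Trᵢ M` of `M` off player `i`'s register. -/
noncomputable def devCCE {k : ℕ} {n : Fin k → ℕ} (i : Fin k)
    (ρ' : Matrix (Fin (n i)) (Fin (n i)) ℂ)
    (M : Matrix (∀ j, Fin (n j)) (∀ j, Fin (n j)) ℂ) :
    Matrix (∀ j, Fin (n j)) (∀ j, Fin (n j)) ℂ :=
  fun s s' => ρ' (s i) (s' i) * ∑ a, M (Function.update s i a) (Function.update s' i a)

/-!
Play the product profiles `⊗ᵢ σ_l` in a greedy schedule that always picks an `l` whose count
lags furthest behind `λ_l · t`. The lags sum to zero and none drops below `-1`, so every count is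
within `m` of `λ_l · T` and the empirical average `ρ̄(T)` of play converges to `ρ*`.

Since `Trᵢ (⊗ⱼ ρⱼ) = ⊗_{j ≠ i} ρⱼ` for density matrices, player `i`'s average regret against `ρ'`
is the linear functional `M ↦ Tr(Rᵢ (ρ' ⊗ Trᵢ M - M))` evaluated at `ρ̄(T)`. It is jointly
continuous in `(M, ρ')`, and density matrices have entries of norm at most `1`, so it converges
to its value at `ρ*` uniformly in `ρ'`; that value is `≤ 0` by the QCCE condition.
-/

open Finset

lemma tendsto_average_of_tendsto_frequency {ι E : Type*} [Fintype ι] [DecidableEq ι]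
    [AddCommGroup E] [Module ℂ E] [TopologicalSpace E] [ContinuousAdd E] [ContinuousSMul ℂ E]
    (s : ℕ → ι) (w : ι → ℝ)
    (hs : ∀ l, Tendsto (fun T : ℕ => (#{t ∈ range T | s t = l} : ℝ) / T) atTop (𝓝 (w l)))
    (f : ι → E) :
    Tendsto (fun T : ℕ => (1 / (T : ℂ)) • ∑ t ∈ range T, f (s t)) atTop
      (𝓝 (∑ l, (w l : ℂ) • f l)) := by
  have hfiber (T : ℕ) : (1 / (T : ℂ)) • ∑ t ∈ range T, f (s t)
      = ∑ l, (((#{t ∈ range T | s t = l} : ℝ) / T : ℝ) : ℂ) • f l := by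
    rw [← sum_fiberwise (range T) s, smul_sum]
    refine sum_congr rfl fun l _ => ?_
    rw [sum_congr rfl fun t ht => by rw [(mem_filter.mp ht).2], sum_const,
      ← Nat.cast_smul_eq_nsmul ℂ, smul_smul]
    push_cast
    ring_nf
  simp_rw [hfiber]
  exact tendsto_finsetSum _ fun l _ =>
    ((Complex.continuous_ofReal.tendsto _).comp (hs l)).smul_const (f l)

section GreedySchedule

variable {ι : Type*} [Fintype ι] [Nonempty ι] (w : ι → ℝ)

noncomputable def greedyPick (c : ι → ℕ) (t : ℕ) : ι :=
  (Finite.exists_max fun l => w l * (t + 1) - c l).choose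

lemma le_greedyPick (c : ι → ℕ) (t : ℕ) (l : ι) :
    w l * (t + 1) - c l ≤ w (greedyPick w c t) * (t + 1) - c (greedyPick w c t) :=
  (Finite.exists_max fun l => w l * (t + 1) - c l).choose_spec l

variable [DecidableEq ι]

noncomputable def greedyCount : ℕ → ι → ℕ
  | 0 => 0
  | t + 1 => greedyCount t + Pi.single (greedyPick w (greedyCount t) t) 1

noncomputable def greedySchedule (t : ℕ) : ι := greedyPick w (greedyCount w t) t

lemma greedyCount_succ (t : ℕ) :
    greedyCount w (t + 1) = greedyCount w t + Pi.single (greedySchedule w t) 1 := rfl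

lemma sum_greedyCount (T : ℕ) : ∑ l, greedyCount w T l = T := by
  induction T with
  | zero => simp [greedyCount]
  | succ T ih => simp [greedyCount_succ, sum_add_distrib, ih]

lemma greedyCount_eq_card (T : ℕ) (l : ι) :
    greedyCount w T l = #{t ∈ range T | greedySchedule w t = l} := by
  induction T with
  | zero => simp [greedyCount]
  | succ T ih =>
    rw [greedyCount_succ, range_add_one, filter_insert]
    by_cases h : greedySchedule w T = l
    · simp [h, ih]
    · simp [h, ih, Ne.symm h]

variable {w}

lemma greedyCount_le (hw : ∀ l, 0 ≤ w l) (hw1 : ∑ l, w l = 1) (T : ℕ) (l : ι) :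
    (greedyCount w T l : ℝ) ≤ w l * T + 1 := by
  induction T generalizing l with
  | zero => simp [greedyCount]
  | succ T ih =>
    -- the deficits `w l * (T + 1) - count` sum to `1`, so the largest one is positive
    have hpos : 0 < w (greedySchedule w T) * (T + 1) - greedyCount w T (greedySchedule w T) := by
      have hcount : ∑ l, (greedyCount w T l : ℝ) = T := by exact_mod_cast sum_greedyCount w T
      have hsum : ∑ _l : ι, (0 : ℝ) < ∑ l, (w l * (T + 1) - greedyCount w T l) := by
        rw [sum_sub_distrib, ← sum_mul, hw1, hcount]; simp
      obtain ⟨l₀, -, hl₀⟩ := exists_lt_of_sum_lt hsum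
      exact hl₀.trans_le (le_greedyPick w _ T l₀)
    rw [greedyCount_succ]
    by_cases h : greedySchedule w T = l
    · subst h
      rw [Pi.add_apply, Pi.single_eq_same]
      push_cast
      linarith
    · rw [Pi.add_apply, Pi.single_eq_of_ne' h, add_zero]
      push_cast
      nlinarith [ih l, hw l]

lemma le_greedyCount (hw : ∀ l, 0 ≤ w l) (hw1 : ∑ l, w l = 1) (T : ℕ) (l : ι) :
    w l * T + 1 - Fintype.card ι ≤ greedyCount w T l := by
  have hcount : ∑ l, (greedyCount w T l : ℝ) = T := by exact_mod_cast sum_greedyCount w T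
  have hsum : ∑ l, (w l * T + 1 - greedyCount w T l) = Fintype.card ι := by
    simp [sum_sub_distrib, sum_add_distrib, ← sum_mul, hw1, hcount]
  have := single_le_sum (fun l _ => sub_nonneg.mpr (greedyCount_le hw hw1 T l)) (mem_univ l)
  linarith

lemma abs_greedyCount_sub_le (hw : ∀ l, 0 ≤ w l) (hw1 : ∑ l, w l = 1) (T : ℕ) (l : ι) :
    |(greedyCount w T l : ℝ) - w l * T| ≤ Fintype.card ι := by
  have : (1 : ℝ) ≤ Fintype.card ι := by exact_mod_cast Fintype.card_pos
  rw [abs_le]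
  constructor <;> linarith [greedyCount_le hw hw1 T l, le_greedyCount hw hw1 T l]

lemma tendsto_greedySchedule_frequency (hw : ∀ l, 0 ≤ w l) (hw1 : ∑ l, w l = 1) (l : ι) :
    Tendsto (fun T : ℕ => (#{t ∈ range T | greedySchedule w t = l} : ℝ) / T) atTop (𝓝 (w l)) := by
  simp_rw [← greedyCount_eq_card]
  rw [tendsto_iff_norm_sub_tendsto_zero]
  refine squeeze_zero' (.of_forall fun _ => norm_nonneg _) ?_
    (tendsto_const_div_atTop_nhds_zero_nat (Fintype.card ι : ℝ))
  filter_upwards [eventually_gt_atTop 0] with T hT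
  have hT' : (0 : ℝ) < T := by exact_mod_cast hT
  rw [Real.norm_eq_abs, div_sub' hT'.ne', mul_comm, abs_div, abs_of_pos hT']
  exact div_le_div_of_nonneg_right (abs_greedyCount_sub_le hw hw1 T l) hT'.le

end GreedySchedule

lemma IsDensity.norm_apply_le_one {d : Type*} [Fintype d] {ρ : Matrix d d ℂ} (hρ : IsDensity ρ)
    (a b : d) : ‖ρ a b‖ ≤ 1 := by
  have hdiag (c : d) : ρ c c ≤ 1 :=
    hρ.2 ▸ single_le_sum (f := fun c => ρ c c) (fun c _ => hρ.1.diag_nonneg) (mem_univ c)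
  -- `‖ρ a b‖ ^ 2 ≤ ρ a a * ρ b b` is the nonnegativity of the `2 × 2` principal minor on `a, b`
  have hminor := (hρ.1.submatrix ![a, b]).det_nonneg
  rw [det_fin_two] at hminor
  simp only [submatrix_apply, Matrix.cons_val_zero, Matrix.cons_val_one] at hminor
  rw [← hρ.1.1.apply b a, Complex.star_def, Complex.mul_conj', sub_nonneg] at hminor
  have hsq : ((‖ρ a b‖ ^ 2 : ℝ) : ℂ) ≤ 1 := by
    push_cast
    exact hminor.trans (mul_le_one₀ (hdiag a) hρ.1.diag_nonneg (hdiag b))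
  exact (sq_le_one_iff₀ (norm_nonneg _)).mp (by exact_mod_cast hsq)

lemma eventually_forall_lt_add_of_tendsto {ι α β : Type*} [TopologicalSpace α]
    [TopologicalSpace β] {f : α → β → ℝ} (hf : Continuous (Function.uncurry f)) {K : Set β}
    (hK : IsCompact K) {l : Filter ι} {u : ι → α} {x : α} (hu : Tendsto u l (𝓝 x)) {δ : ℝ}
    (hδ : 0 < δ) : ∀ᶠ T in l, ∀ y ∈ K, f (u T) y < f x y + δ := by
  obtain ⟨v, hv, hvK⟩ := hK.mem_uniformity_of_prod hf.continuousOn (Set.mem_univ x)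
    (Metric.dist_mem_uniformity hδ)
  rw [nhdsWithin_univ] at hv
  filter_upwards [hu hv] with T hT y hy
  have := hvK _ hT y hy
  rw [Set.mem_ofPred_eq, Real.dist_eq, abs_sub_lt_iff] at this
  linarith

section Deviation

variable {k : ℕ} {n : Fin k → ℕ}

lemma devCCE_add (i : Fin k) (ρ' : Matrix (Fin (n i)) (Fin (n i)) ℂ)
    (M N : Matrix (∀ j, Fin (n j)) (∀ j, Fin (n j)) ℂ) :
    devCCE i ρ' (M + N) = devCCE i ρ' M + devCCE i ρ' N := by
  ext s s'
  simp [devCCE, sum_add_distrib, mul_add]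

lemma devCCE_smul (i : Fin k) (ρ' : Matrix (Fin (n i)) (Fin (n i)) ℂ) (c : ℂ)
    (M : Matrix (∀ j, Fin (n j)) (∀ j, Fin (n j)) ℂ) :
    devCCE i ρ' (c • M) = c • devCCE i ρ' M := by
  ext s s'
  simp only [devCCE, Matrix.smul_apply, smul_eq_mul, ← mul_sum]
  ring

noncomputable def deviationGain (R : Matrix (∀ j, Fin (n j)) (∀ j, Fin (n j)) ℂ) (i : Fin k)
    (ρ' : Matrix (Fin (n i)) (Fin (n i)) ℂ) :
    Matrix (∀ j, Fin (n j)) (∀ j, Fin (n j)) ℂ →ₗ[ℂ] ℂ where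
  toFun M := (R * (devCCE i ρ' M - M)).trace
  map_add' M N := by
    rw [devCCE_add, add_sub_add_comm, Matrix.mul_add, trace_add]
  map_smul' c M := by
    rw [devCCE_smul, ← smul_sub, Matrix.mul_smul, trace_smul, RingHom.id_apply]

lemma re_deviationGain (R : Matrix (∀ j, Fin (n j)) (∀ j, Fin (n j)) ℂ) (i : Fin k)
    (ρ' : Matrix (Fin (n i)) (Fin (n i)) ℂ) (M : Matrix (∀ j, Fin (n j)) (∀ j, Fin (n j)) ℂ) :
    (deviationGain R i ρ' M).re = ((R * devCCE i ρ' M).trace).re - ((R * M).trace).re := by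
  simp [deviationGain, Matrix.mul_sub, trace_sub]

lemma continuous_deviationGain (R : Matrix (∀ j, Fin (n j)) (∀ j, Fin (n j)) ℂ) (i : Fin k) :
    Continuous fun p : Matrix (∀ j, Fin (n j)) (∀ j, Fin (n j)) ℂ ×
      Matrix (Fin (n i)) (Fin (n i)) ℂ => deviationGain R i p.2 p.1 := by
  have : Continuous fun p : Matrix (∀ j, Fin (n j)) (∀ j, Fin (n j)) ℂ ×
      Matrix (Fin (n i)) (Fin (n i)) ℂ => devCCE i p.2 p.1 := by
    unfold devCCE
    fun_prop
  simp only [deviationGain, LinearMap.coe_mk, AddHom.coe_mk]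
  fun_prop

lemma prodProfile_update (σ : ∀ i, Matrix (Fin (n i)) (Fin (n i)) ℂ) (i : Fin k)
    (hσ : (σ i).trace = 1) (ρ' : Matrix (Fin (n i)) (Fin (n i)) ℂ) :
    prodProfile (Function.update σ i ρ') = devCCE i ρ' (prodProfile σ) := by
  ext s s'
  have hsplit (τ : ∀ i, Matrix (Fin (n i)) (Fin (n i)) ℂ) (u u' : ∀ j, Fin (n j)) :
      ∏ j, τ j (u j) (u' j) = τ i (u i) (u' i) * ∏ j ∈ univ.erase i, τ j (u j) (u' j) :=
    (mul_prod_erase univ _ (mem_univ i)).symm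
  have hrest (a : Fin (n i)) :
      ∏ j ∈ univ.erase i, σ j (Function.update s i a j) (Function.update s' i a j)
        = ∏ j ∈ univ.erase i, Function.update σ i ρ' j (s j) (s' j) := by
    refine prod_congr rfl fun j hj => ?_
    simp [Function.update_of_ne (ne_of_mem_erase hj)]
  simp only [prodProfile, devCCE, hsplit, hrest, Function.update_self, ← sum_mul]
  rw [show ∑ a, σ i a a = 1 from hσ, one_mul]

lemma average_regret_eq_deviationGain (R : Matrix (∀ j, Fin (n j)) (∀ j, Fin (n j)) ℂ)
    (i : Fin k) (ρ : ℕ → ∀ j, Matrix (Fin (n j)) (Fin (n j)) ℂ) (hρ : ∀ t, (ρ t i).trace = 1)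
    (ρ' : Matrix (Fin (n i)) (Fin (n i)) ℂ) (T : ℕ) :
    (1 / (T : ℝ)) * ∑ t ∈ range T,
        (((R * prodProfile (Function.update (ρ t) i ρ')).trace).re
          - ((R * prodProfile (ρ t)).trace).re)
      = (deviationGain R i ρ' ((1 / (T : ℂ)) • ∑ t ∈ range T, prodProfile (ρ t))).re := by
  have hupd (t : ℕ) : prodProfile (Function.update (ρ t) i ρ') = devCCE i ρ' (prodProfile (ρ t)) :=
    prodProfile_update _ i (hρ t) ρ'
  simp only [hupd, ← re_deviationGain, map_smul, map_sum, smul_eq_mul, ← Complex.re_sum]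
  rw [← Complex.ofReal_natCast, ← Complex.ofReal_one, ← Complex.ofReal_div, Complex.re_ofReal_mul]

lemma eventually_re_deviationGain_lt (R : Matrix (∀ j, Fin (n j)) (∀ j, Fin (n j)) ℂ)
    (i : Fin k) {ι : Type*} {l : Filter ι} {M : ι → Matrix (∀ j, Fin (n j)) (∀ j, Fin (n j)) ℂ}
    {M₀ : Matrix (∀ j, Fin (n j)) (∀ j, Fin (n j)) ℂ} (hM : Tendsto M l (𝓝 M₀))
    {δ : ℝ} (hδ : 0 < δ) :
    ∀ᶠ T in l, ∀ ρ', IsDensity ρ' →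
      (deviationGain R i ρ' (M T)).re < (deviationGain R i ρ' M₀).re + δ := by
  have hK : IsCompact (Set.univ.pi fun _ => Set.univ.pi fun _ => Metric.closedBall 0 1 :
      Set (Matrix (Fin (n i)) (Fin (n i)) ℂ)) :=
    isCompact_univ_pi fun _ => isCompact_univ_pi fun _ => isCompact_closedBall 0 1
  filter_upwards [eventually_forall_lt_add_of_tendsto
    (f := fun M ρ' => (deviationGain R i ρ' M).re)
    (Complex.continuous_re.comp (continuous_deviationGain R i)) hK hM hδ] with T hT ρ' hρ'
  exact hT ρ' fun a _ b _ => mem_closedBall_zero_iff.mpr (hρ'.norm_apply_le_one a b)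

end Deviation

theorem stmt_4_general {k : ℕ} {n : Fin k → ℕ}
    (R : ∀ _ : Fin k, Matrix (∀ j, Fin (n j)) (∀ j, Fin (n j)) ℂ)
    (m : ℕ) (lam : Fin m → ℝ) (σ : Fin m → ∀ i, Matrix (Fin (n i)) (Fin (n i)) ℂ)
    (hlam : ∀ l, 0 ≤ lam l) (hsum : ∑ l, lam l = 1) (hσ : ∀ l i, IsDensity (σ l i))
    (ρstar : Matrix (∀ j, Fin (n j)) (∀ j, Fin (n j)) ℂ)
    (hρstar : ρstar = ∑ l, (lam l : ℂ) • prodProfile (σ l))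
    (hQCCE : ∀ i, ∀ ρ' : Matrix (Fin (n i)) (Fin (n i)) ℂ, IsDensity ρ' →
      ((R i * devCCE i ρ' ρstar).trace).re ≤ ((R i * ρstar).trace).re) :
    ∃ ρ : ℕ → ∀ i, Matrix (Fin (n i)) (Fin (n i)) ℂ,
      (∀ t i, IsDensity (ρ t i)) ∧
      Tendsto (fun T : ℕ => (1 / (T : ℂ)) • ∑ t ∈ Finset.range T, prodProfile (ρ t))
        atTop (𝓝 ρstar) ∧
      (∀ i, ∀ δ : ℝ, 0 < δ → ∃ T₀ : ℕ, ∀ T ≥ T₀,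
        ∀ ρ' : Matrix (Fin (n i)) (Fin (n i)) ℂ, IsDensity ρ' →
          (1 / (T : ℝ)) * ∑ t ∈ Finset.range T,
            (((R i * prodProfile (Function.update (ρ t) i ρ')).trace).re
              - ((R i * prodProfile (ρ t)).trace).re) ≤ δ) := by
  have : Nonempty (Fin m) := ⟨⟨0, Nat.pos_of_ne_zero fun hm => by subst hm; simp at hsum⟩⟩
  have hconv : Tendsto (fun T : ℕ => (1 / (T : ℂ)) •
      ∑ t ∈ Finset.range T, prodProfile (σ (greedySchedule lam t))) atTop (𝓝 ρstar) := by
    rw [hρstar]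
    exact tendsto_average_of_tendsto_frequency (greedySchedule lam) lam
      (tendsto_greedySchedule_frequency hlam hsum) (fun l => prodProfile (σ l))
  refine ⟨fun t => σ (greedySchedule lam t), fun t i => hσ _ i, hconv, fun i δ hδ => ?_⟩
  obtain ⟨T₀, hT₀⟩ := eventually_atTop.mp (eventually_re_deviationGain_lt (R i) i hconv hδ)
  refine ⟨T₀, fun T hT ρ' hρ' => ?_⟩
  rw [average_regret_eq_deviationGain (R i) i _ (fun t => (hσ _ i).2)]
  have hequilibrium : (deviationGain (R i) i ρ' ρstar).re ≤ 0 := by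
    rw [re_deviationGain]
    linarith [hQCCE i ρ' hρ']
  linarith [hT₀ T hT ρ' hρ']

/-- Every separable QCCE is reachable by no-regret play (Theorem 3.1(b)). -/
theorem stmt_4 {k : ℕ} {n : Fin k → ℕ}
    (R : ∀ _ : Fin k, Matrix (∀ j, Fin (n j)) (∀ j, Fin (n j)) ℂ)
    (hR : ∀ i, (R i).IsHermitian)
    (m : ℕ) (lam : Fin m → ℝ) (σ : Fin m → ∀ i, Matrix (Fin (n i)) (Fin (n i)) ℂ)
    (hlam : ∀ l, 0 ≤ lam l) (hsum : ∑ l, lam l = 1) (hσ : ∀ l i, IsDensity (σ l i))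
    (ρstar : Matrix (∀ j, Fin (n j)) (∀ j, Fin (n j)) ℂ)
    (hρstar : ρstar = ∑ l, (lam l : ℂ) • prodProfile (σ l))
    (hQCCE : ∀ i, ∀ ρ' : Matrix (Fin (n i)) (Fin (n i)) ℂ, IsDensity ρ' →
      ((R i * devCCE i ρ' ρstar).trace).re ≤ ((R i * ρstar).trace).re) :
    ∃ ρ : ℕ → ∀ i, Matrix (Fin (n i)) (Fin (n i)) ℂ,
      (∀ t i, IsDensity (ρ t i)) ∧
      Tendsto (fun T : ℕ => (1 / (T : ℂ)) • ∑ t ∈ Finset.range T, prodProfile (ρ t))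
        atTop (𝓝 ρstar) ∧
      (∀ i, ∀ δ : ℝ, 0 < δ → ∃ T₀ : ℕ, ∀ T ≥ T₀,
        ∀ ρ' : Matrix (Fin (n i)) (Fin (n i)) ℂ, IsDensity ρ' →
          (1 / (T : ℝ)) * ∑ t ∈ Finset.range T,
            (((R i * prodProfile (Function.update (ρ t) i ρ')).trace).re
              - ((R i * prodProfile (ρ t)).trace).re) ≤ δ) :=
  stmt_4_general R m lam σ hlam hsum hσ ρstar hρstar hQCCE
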